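/- Let n ∈ ℕ and let R : ℝ → Matrix (Fin n) (Fin n) ℝ be such that R(t) is symmetric for every t ∈ ℝ. Let X, Y : ℝ → Matrix (Fin n) (Fin n) ℝ be twice differentiable (entrywise) with X''(t) = −R(t) · X(t) and Y''(t) = −R(t) · Y(t) for all t. Suppose there are a, b ∈ ℝ with X(a) = 0, X'(a) = 1 (the identity matrix), Y(b) = 0, and Y'(b) = 1. Then Y(a) = −(X(b))ᵀ; in particular det Y(a) = (−1)^n det X(b), so |det Y(a)| = |det X(b)|. -/

import Mathlib

/-!
The Wronskian `W = Xᵀ Y' - X'ᵀ Y` of two solutions of `X'' = -R X` has derivative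
`Xᵀ Y'' - X''ᵀ Y = -Xᵀ R Y + (R X)ᵀ Y`, which vanishes because `R` is symmetric, so `W` is
constant. The boundary conditions give `W a = -Y a` and `W b = (X b)ᵀ`.
-/

open Matrix

namespace Matrix

variable {l m n : Type*}

theorem transpose_mul_neg_mul_of_symm [Fintype m] {α : Type*} [CommRing α] {R : Matrix m m α}
    (hR : Rᵀ = R) (X : Matrix m l α) (Y : Matrix m n α) :
    Xᵀ * -(R * Y) = (-(R * X))ᵀ * Y := by
  rw [transpose_neg, transpose_mul, hR, Matrix.mul_neg, Matrix.neg_mul, Matrix.mul_assoc]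

section EntrywiseDerivative

variable {t : ℝ}

theorem hasDerivAt_mul_apply [Fintype m] {A : ℝ → Matrix l m ℝ} {B : ℝ → Matrix m n ℝ}
    {A' : Matrix l m ℝ} {B' : Matrix m n ℝ}
    (hA : ∀ i j, HasDerivAt (fun s => A s i j) (A' i j) t)
    (hB : ∀ i j, HasDerivAt (fun s => B s i j) (B' i j) t) (i : l) (k : n) :
    HasDerivAt (fun s => (A s * B s) i k) ((A' * B t + A t * B') i k) t := by
  simp only [mul_apply, add_apply, ← Finset.sum_add_distrib]
  exact HasDerivAt.fun_sum fun j _ => (hA i j).mul (hB j k)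

theorem eq_of_forall_hasDerivAt_apply_zero {W : ℝ → Matrix m n ℝ}
    (hW : ∀ t i j, HasDerivAt (fun s => W s i j) 0 t) (a b : ℝ) : W a = W b := by
  ext i j
  exact is_const_of_deriv_eq_zero (fun t => (hW t i j).differentiableAt)
    (fun t => (hW t i j).deriv) a b

end EntrywiseDerivative

end Matrix

section Wronskian

variable {m p q : Type*} [Fintype m]

def wronskian (X X' : ℝ → Matrix m p ℝ) (Y Y' : ℝ → Matrix m q ℝ) (t : ℝ) : Matrix p q ℝ :=
  (X t)ᵀ * Y' t - (X' t)ᵀ * Y t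

variable {R : ℝ → Matrix m m ℝ} {X X' X'' : ℝ → Matrix m p ℝ} {Y Y' Y'' : ℝ → Matrix m q ℝ}

theorem hasDerivAt_wronskian_apply (hR : ∀ t, (R t)ᵀ = R t)
    (hX' : ∀ t i j, HasDerivAt (fun s => X s i j) (X' t i j) t)
    (hX'' : ∀ t i j, HasDerivAt (fun s => X' s i j) (X'' t i j) t)
    (hY' : ∀ t i j, HasDerivAt (fun s => Y s i j) (Y' t i j) t)
    (hY'' : ∀ t i j, HasDerivAt (fun s => Y' s i j) (Y'' t i j) t)
    (hXJ : ∀ t, X'' t = -(R t * X t)) (hYJ : ∀ t, Y'' t = -(R t * Y t)) (t : ℝ) (i : p) (k : q) :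
    HasDerivAt (fun s => wronskian X X' Y Y' s i k) 0 t := by
  have hXT : ∀ i j, HasDerivAt (fun s => (X s)ᵀ i j) ((X' t)ᵀ i j) t := fun i j => hX' t j i
  have hX'T : ∀ i j, HasDerivAt (fun s => (X' s)ᵀ i j) ((X'' t)ᵀ i j) t :=
    fun i j => hX'' t j i
  have hW := (hasDerivAt_mul_apply hXT (hY'' t) i k).fun_sub
    (hasDerivAt_mul_apply hX'T (hY' t) i k)
  have hzero : ((X' t)ᵀ * Y' t + (X t)ᵀ * Y'' t) - ((X'' t)ᵀ * Y t + (X' t)ᵀ * Y' t) = 0 := by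
    rw [hXJ, hYJ, transpose_mul_neg_mul_of_symm (hR t)]
    abel
  simp only [wronskian, Matrix.sub_apply]
  exact hW.congr_deriv (by rw [← Matrix.sub_apply, hzero, Matrix.zero_apply])

end Wronskian

/-- If `X` and `Y` solve the matrix Jacobi equation `X'' = -R·X` with `R(t)`
symmetric, `X(a) = 0`, `X'(a) = 1`, `Y(b) = 0`, `Y'(b) = 1`, then
`Y(a) = -(X(b))ᵀ`; in particular `det Y(a) = (-1)^n det X(b)` and
`|det Y(a)| = |det X(b)|`. -/
theorem jacobi_det_symmetry
    (n : ℕ) (R X X' X'' Y Y' Y'' : ℝ → Matrix (Fin n) (Fin n) ℝ)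
    (hR : ∀ t, (R t)ᵀ = R t)
    (hX' : ∀ t i j, HasDerivAt (fun s => X s i j) (X' t i j) t)
    (hX'' : ∀ t i j, HasDerivAt (fun s => X' s i j) (X'' t i j) t)
    (hY' : ∀ t i j, HasDerivAt (fun s => Y s i j) (Y' t i j) t)
    (hY'' : ∀ t i j, HasDerivAt (fun s => Y' s i j) (Y'' t i j) t)
    (hXJ : ∀ t, X'' t = -(R t * X t))
    (hYJ : ∀ t, Y'' t = -(R t * Y t))
    (a b : ℝ)
    (hXa : X a = 0) (hX'a : X' a = 1)
    (hYb : Y b = 0) (hY'b : Y' b = 1) :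
    Y a = -(X b)ᵀ ∧ (Y a).det = (-1 : ℝ) ^ n * (X b).det ∧
      |(Y a).det| = |(X b).det| := by
  have hconst : wronskian X X' Y Y' a = wronskian X X' Y Y' b :=
    eq_of_forall_hasDerivAt_apply_zero
      (hasDerivAt_wronskian_apply hR hX' hX'' hY' hY'' hXJ hYJ) a b
  have hYa : Y a = -(X b)ᵀ := by
    simpa [wronskian, hXa, hX'a, hYb, hY'b, neg_eq_iff_eq_neg] using hconst
  have hdet : (Y a).det = (-1 : ℝ) ^ n * (X b).det := by
    rw [hYa, det_neg, det_transpose, Fintype.card_fin]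
  refine ⟨hYa, hdet, ?_⟩
  rw [hdet, abs_mul, abs_pow, abs_neg, abs_one, one_pow, one_mul]
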